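/- arXiv:2405.01368 — 3 statements merged into one kernel-verified Lean document; each statement's English description precedes it below -/
import Mathlib

section
/- Let (U₁,...,Uₙ) have an extremal mixture copula C = ∑_{i=1}^{2^{n-1}} aᵢ C^{(i)} with a ∈ Δ_{2^{n-1}} and a₁ < 1, where C^{(1)} is the comonotonicity copula. Then for r ≤ −1 and w ∈ Δₙ with all wᵢ > 0, P(M_r^w(U₁,...,Uₙ) ≤ p) > p for all p ∈ (0,1). -/
open MeasureTheory Set
open scoped ENNReal

/-- The extremal copula with index set `J`: the joint distribution of `(U j)_j` with
`U j = V` for `j ∈ J` and `U j = 1 - V` for `j ∉ J`, where `V` is standard uniform. -/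
noncomputable def extremalCopula (n : ℕ) (J : Finset (Fin n)) : Measure (Fin n → ℝ) :=
  Measure.map (fun v => (fun j => if j ∈ J then v else 1 - v))
    (volume.restrict (Ioo (0:ℝ) 1))


lemma pointwise_ineq (s t v p r : ℝ) (hs : 0 ≤ s) (ht : 0 ≤ t) (hst : s + t = 1)
    (hv : 0 < v) (hv1 : v < 1) (hr : r ≤ -1) (hp : 0 < p)
    (hq : v * (1 - v) ≤ p * (s * (1 - v) + t * v)) :
    (s * v ^ r + t * (1 - v) ^ r) ^ r⁻¹ ≤ p := by
  have hv1' : 0 < 1 - v := by linarith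
  have hvr : (0:ℝ) < v ^ r := Real.rpow_pos_of_pos hv r
  have hv1r : (0:ℝ) < (1-v) ^ r := Real.rpow_pos_of_pos hv1' r
  have hB : 0 < s * v ^ r + t * (1 - v) ^ r := by
    rcases lt_or_ge 0 s with h | h
    · have : 0 ≤ t * (1-v)^r := mul_nonneg ht hv1r.le
      nlinarith
    · have hs0 : s = 0 := le_antisymm h hs
      have ht1 : t = 1 := by linarith
      rw [hs0, ht1]; simpa using hv1r
  have hA : 0 < s * v⁻¹ + t * (1 - v)⁻¹ := by
    rcases lt_or_ge 0 s with h | h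
    · have h2 : 0 ≤ t * (1-v)⁻¹ := mul_nonneg ht (inv_pos.2 hv1').le
      have h3 : 0 < s * v⁻¹ := mul_pos h (inv_pos.2 hv)
      linarith
    · have hs0 : s = 0 := le_antisymm h hs
      have ht1 : t = 1 := by linarith
      rw [hs0, ht1]; simp
      linarith
  set q : ℝ := -r with hqdef
  have hq1 : 1 ≤ q := by simp [hqdef]; linarith
  -- arith mean ≤ rpow mean with two points
  have hmean : s * v⁻¹ + t * (1-v)⁻¹ ≤ (s * (v⁻¹) ^ q + t * ((1-v)⁻¹) ^ q) ^ (1/q) := by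
    have := Real.arith_mean_le_rpow_mean (Finset.univ : Finset (Fin 2))
      ![s, t] ![v⁻¹, (1-v)⁻¹]
      (by intro i _; fin_cases i <;> simpa)
      (by simp [Fin.sum_univ_two, hst])
      (by intro i _; fin_cases i <;> simp <;> [exact hv.le; linarith]) hq1
    simpa [Fin.sum_univ_two] using this
  have hzv : (v⁻¹) ^ q = v ^ r := by
    rw [← Real.rpow_neg_one v, ← Real.rpow_mul hv.le]
    norm_num [hqdef]
  have hzv1 : ((1-v)⁻¹) ^ q = (1-v) ^ r := by
    rw [← Real.rpow_neg_one (1-v), ← Real.rpow_mul hv1'.le]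
    norm_num [hqdef]
  rw [hzv, hzv1] at hmean
  have hr0 : r ≠ 0 := by intro h; rw [h] at hr; norm_num at hr
  have h1q : 1/q = -r⁻¹ := by
    rw [hqdef]; field_simp
  rw [h1q] at hmean
  -- so A ≤ B ^ (-r⁻¹), hence B ^ r⁻¹ = (B^(-r⁻¹))⁻¹ ≤ A⁻¹ ≤ p
  have hBneg : (s * v ^ r + t * (1 - v) ^ r) ^ r⁻¹ = ((s * v ^ r + t * (1 - v) ^ r) ^ (-r⁻¹))⁻¹ := by
    rw [← Real.rpow_neg hB.le, neg_neg]
  rw [hBneg]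
  have hstep : ((s * v ^ r + t * (1 - v) ^ r) ^ (-r⁻¹))⁻¹ ≤ (s * v⁻¹ + t * (1-v)⁻¹)⁻¹ :=
    inv_anti₀ hA hmean
  refine hstep.trans ?_
  rw [inv_le_iff_one_le_mul₀ hA]
  have key : p * (s * v⁻¹ + t * (1 - v)⁻¹) = p * (s * (1-v) + t * v) / (v * (1-v)) := by
    field_simp
  rw [key, le_div_iff₀ (by positivity)]
  linarith

lemma core_bound (s p r : ℝ) (hs0 : 0 ≤ s) (hs1 : s ≤ 1) (hr : r ≤ -1)
    (hp0 : 0 < p) (hp1 : p < 1) :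
    ENNReal.ofReal
        (1 - Real.sqrt (max ((1 + p*(2*s-1))^2 - 4*(p*s)) 0)) ≤
      volume.restrict (Ioo (0:ℝ) 1)
        {v | (s * v ^ r + (1-s) * (1-v) ^ r) ^ r⁻¹ ≤ p} := by
  set b : ℝ := 1 + p*(2*s-1) with hb
  set D : ℝ := b^2 - 4*(p*s) with hD
  set e : ℝ := Real.sqrt (max D 0) with he
  have he0 : 0 ≤ e := Real.sqrt_nonneg _
  have he2 : e^2 = max D 0 := Real.sq_sqrt (le_max_right _ _)
  have hDle : D ≤ max D 0 := le_max_left _ _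
  have hsub : Ioo (0:ℝ) 1 \ Ioo ((b-e)/2) ((b+e)/2) ⊆
      {v | (s * v ^ r + (1-s) * (1-v) ^ r) ^ r⁻¹ ≤ p} ∩ Ioo 0 1 := by
    rintro v ⟨⟨hv0, hv1⟩, hnot⟩
    refine ⟨?_, hv0, hv1⟩
    have hvcd : v ≤ (b-e)/2 ∨ (b+e)/2 ≤ v := by
      by_contra h
      push_neg at h
      exact hnot ⟨h.1, h.2⟩
    have hfac : 0 ≤ (v - (b-e)/2) * (v - (b+e)/2) := by
      rcases hvcd with h | h
      · nlinarith [h, he0]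
      · apply mul_nonneg <;> nlinarith
    have hq : v * (1 - v) ≤ p * (s * (1 - v) + (1-s) * v) := by nlinarith
    exact pointwise_ineq s (1-s) v p r hs0 (by linarith) (by ring) hv0 hv1 hr hp0 hq
  rw [Measure.restrict_apply' measurableSet_Ioo]
  have h1 : (ENNReal.ofReal 1 : ℝ≥0∞) ≤
      volume (Ioo (0:ℝ) 1 \ Ioo ((b-e)/2) ((b+e)/2)) + ENNReal.ofReal e := by
    have hcover : Ioo (0:ℝ) 1 ⊆ (Ioo (0:ℝ) 1 \ Ioo ((b-e)/2) ((b+e)/2)) ∪ Ioo ((b-e)/2) ((b+e)/2) := by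
      intro x hx
      by_cases hx2 : x ∈ Ioo ((b-e)/2) ((b+e)/2)
      · exact Or.inr hx2
      · exact Or.inl ⟨hx, hx2⟩
    calc (ENNReal.ofReal 1 : ℝ≥0∞) = volume (Ioo (0:ℝ) 1) := by
            rw [Real.volume_Ioo]; norm_num
      _ ≤ _ := (measure_mono hcover).trans ((measure_union_le _ _).trans (by
            rw [Real.volume_Ioo, show (b+e)/2 - (b-e)/2 = e by ring]))
  calc ENNReal.ofReal (1 - e) = ENNReal.ofReal 1 - ENNReal.ofReal e :=
        ENNReal.ofReal_sub 1 he0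
    _ ≤ volume (Ioo (0:ℝ) 1 \ Ioo ((b-e)/2) ((b+e)/2)) := tsub_le_iff_right.mpr h1
    _ ≤ _ := measure_mono hsub

lemma sqrt_bound (s p : ℝ) (hs0 : 0 ≤ s) (hs1 : s ≤ 1) (hp0 : 0 < p) (hp1 : p < 1) :
    Real.sqrt (max ((1 + p*(2*s-1))^2 - 4*(p*s)) 0) ≤ 1 - p := by
  have h : max ((1 + p*(2*s-1))^2 - 4*(p*s)) 0 ≤ (1-p)^2 := by
    apply max_le _ (by positivity)
    nlinarith [mul_nonneg (mul_nonneg hp0.le hp0.le) (mul_nonneg hs0 (by linarith : (0:ℝ) ≤ 1 - s))]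
  calc Real.sqrt (max ((1 + p*(2*s-1))^2 - 4*(p*s)) 0) ≤ Real.sqrt ((1-p)^2) :=
        Real.sqrt_le_sqrt h
    _ = 1 - p := by rw [Real.sqrt_sq (by linarith)]

lemma sqrt_bound_strict (s p : ℝ) (hs0 : 0 < s) (hs1 : s < 1) (hp0 : 0 < p) (hp1 : p < 1) :
    Real.sqrt (max ((1 + p*(2*s-1))^2 - 4*(p*s)) 0) < 1 - p := by
  have h : max ((1 + p*(2*s-1))^2 - 4*(p*s)) 0 < (1-p)^2 := by
    apply max_lt _ (by nlinarith)
    nlinarith [mul_pos (mul_pos hp0 hp0) (mul_pos hs0 (by linarith : (0:ℝ) < 1 - s))]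
  calc Real.sqrt (max ((1 + p*(2*s-1))^2 - 4*(p*s)) 0) < Real.sqrt ((1-p)^2) :=
        Real.sqrt_lt_sqrt (le_max_right _ _) h
    _ = 1 - p := by rw [Real.sqrt_sq (by linarith)]

/-- Let `(U 0, ..., U (n-1))` have an extremal mixture copula `∑_J a J • C^(J)` with
nonnegative weights summing to one, where the total weight on the comonotonicity copula
(index sets `univ` and `∅`) is less than one. Then for `r ≤ -1` and strictly positive
weights `w` summing to one, `P(M_r^w(U) ≤ p) > p` for all `p ∈ (0,1)`. -/
theorem extremal_mixture_strictly_subuniform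
    {Ω : Type*} [MeasurableSpace Ω] (μ : Measure Ω) [IsProbabilityMeasure μ]
    (n : ℕ) (hn : 2 ≤ n)
    (a : Finset (Fin n) → ℝ) (ha : ∀ J, 0 ≤ a J) (ha1 : ∑ J, a J = 1)
    (hcom : a Finset.univ + a ∅ < 1)
    (U : Fin n → Ω → ℝ) (hMeas : ∀ i, Measurable (U i))
    (hlaw : Measure.map (fun ω => (fun i => U i ω)) μ =
      ∑ J : Finset (Fin n), ENNReal.ofReal (a J) • extremalCopula n J)
    (r : ℝ) (hr : r ≤ -1)
    (w : Fin n → ℝ) (hw : ∀ i, 0 < w i) (hw1 : ∑ i, w i = 1)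
    (p : ℝ) (hp : p ∈ Ioo (0:ℝ) 1) :
    ENNReal.ofReal p < μ {ω | (∑ i, w i * U i ω ^ r) ^ r⁻¹ ≤ p} := by
  obtain ⟨hp0, hp1⟩ := hp
  -- the event as a preimage
  set A : Set (Fin n → ℝ) := {x | (∑ i, w i * x i ^ r) ^ r⁻¹ ≤ p} with hA
  have hAmeas : MeasurableSet A := by
    have hF : Measurable fun x : Fin n → ℝ => (∑ i, w i * x i ^ r) ^ r⁻¹ := by fun_prop
    exact hF measurableSet_Iic
  -- the per-J set in v
  have hmapMeas : Measurable fun ω => (fun i => U i ω) := measurable_pi_lambda _ hMeas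
  have hev : μ {ω | (∑ i, w i * U i ω ^ r) ^ r⁻¹ ≤ p} =
      ∑ J : Finset (Fin n), ENNReal.ofReal (a J) * extremalCopula n J A := by
    have h1 : {ω | (∑ i, w i * U i ω ^ r) ^ r⁻¹ ≤ p} = (fun ω => (fun i => U i ω)) ⁻¹' A := rfl
    rw [h1, ← Measure.map_apply hmapMeas hAmeas, hlaw]
    rw [Measure.finset_sum_apply]
    simp [Measure.smul_apply, smul_eq_mul]
  -- compute extremalCopula n J A
  have hcop : ∀ J : Finset (Fin n), extremalCopula n J A =
      volume.restrict (Ioo (0:ℝ) 1)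
        {v | ((∑ i ∈ J, w i) * v ^ r + (1 - ∑ i ∈ J, w i) * (1-v) ^ r) ^ r⁻¹ ≤ p} := by
    intro J
    have hT : Measurable fun v : ℝ => (fun j => if j ∈ J then v else 1 - v) := by
      apply measurable_pi_lambda
      intro j
      by_cases h : j ∈ J <;> simp [h] <;> fun_prop
    rw [extremalCopula, Measure.map_apply hT hAmeas]
    congr 1
    ext v
    simp only [mem_preimage, hA, mem_setOf_eq]
    have hsum : ∑ i, w i * (if i ∈ J then v else 1-v) ^ r
        = (∑ i ∈ J, w i) * v ^ r + (1 - ∑ i ∈ J, w i) * (1-v) ^ r := by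
      have h2 : (1 - ∑ i ∈ J, w i) = ∑ i ∈ Jᶜ, w i := by
        have := Finset.sum_add_sum_compl J w
        rw [hw1] at this
        linarith
      rw [h2, Finset.sum_mul, Finset.sum_mul]
      rw [show (∑ i, w i * (if i ∈ J then v else 1-v) ^ r)
          = ∑ i, (if i ∈ J then w i * v ^ r else w i * (1-v) ^ r) from
        Finset.sum_congr rfl (by intro i _; by_cases h : i ∈ J <;> simp [h])]
      rw [Finset.sum_ite]
      congr 1
      · apply Finset.sum_congr _ (fun _ _ => rfl)
        simp
      · apply Finset.sum_congr _ (fun _ _ => rfl)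
        ext i
        simp
    rw [hsum]
  -- lower bounds
  have hwle : ∀ J : Finset (Fin n), (0:ℝ) ≤ ∑ i ∈ J, w i :=
    fun J => Finset.sum_nonneg (fun i _ => (hw i).le)
  have hwle1 : ∀ J : Finset (Fin n), (∑ i ∈ J, w i) ≤ 1 := by
    intro J
    rw [← hw1]
    exact Finset.sum_le_sum_of_subset_of_nonneg (Finset.subset_univ J)
      (fun i _ _ => (hw i).le)
  have hmge : ∀ J : Finset (Fin n), ENNReal.ofReal p ≤ extremalCopula n J A := by
    intro J
    rw [hcop J]
    refine le_trans ?_ (core_bound _ p r (hwle J) (hwle1 J) hr hp0 hp1)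
    exact ENNReal.ofReal_le_ofReal (by
      have := sqrt_bound (∑ i ∈ J, w i) p (hwle J) (hwle1 J) hp0 hp1
      linarith)
  -- pick J₀
  have hex : ∃ J₀ : Finset (Fin n), 0 < a J₀ ∧ J₀ ≠ Finset.univ ∧ J₀ ≠ ∅ := by
    by_contra h
    push_neg at h
    have huniv_ne : (Finset.univ : Finset (Fin n)) ≠ ∅ := by
      have : (⟨0, by omega⟩ : Fin n) ∈ (Finset.univ : Finset (Fin n)) := Finset.mem_univ _
      intro hc
      rw [hc] at this
      exact absurd this (Finset.notMem_empty _)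
    have hsum2 : ∑ J ∈ ({Finset.univ, ∅} : Finset (Finset (Fin n))), a J = ∑ J, a J := by
      apply Finset.sum_subset (Finset.subset_univ _)
      intro J _ hJ
      simp only [Finset.mem_insert, Finset.mem_singleton] at hJ
      push_neg at hJ
      by_contra hne
      have hpos : 0 < a J := lt_of_le_of_ne (ha J) (Ne.symm hne)
      exact hJ.2.ne_empty (h J hpos hJ.1)
    rw [Finset.sum_pair huniv_ne, ha1] at hsum2
    linarith
  obtain ⟨J₀, haJ₀, hJu, hJe⟩ := hex
  -- strict bound for J₀
  have hs0pos : 0 < ∑ i ∈ J₀, w i := by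
    obtain ⟨i, hi⟩ := Finset.nonempty_of_ne_empty hJe
    exact Finset.sum_pos' (fun j _ => (hw j).le) ⟨i, hi, hw i⟩
  have hs0lt : (∑ i ∈ J₀, w i) < 1 := by
    obtain ⟨i, hi⟩ : ∃ i, i ∉ J₀ := by
      by_contra hc
      push_neg at hc
      exact hJu (Finset.eq_univ_iff_forall.2 hc)
    rw [← hw1]
    exact Finset.sum_lt_sum_of_subset (Finset.subset_univ J₀) (Finset.mem_univ i) hi (hw i)
      (fun j _ _ => (hw j).le)
  have hmgt : ENNReal.ofReal p < extremalCopula n J₀ A := by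
    rw [hcop J₀]
    refine lt_of_lt_of_le ?_ (core_bound _ p r (hwle J₀) (hwle1 J₀) hr hp0 hp1)
    have hst := sqrt_bound_strict (∑ i ∈ J₀, w i) p hs0pos hs0lt hp0 hp1
    exact (ENNReal.ofReal_lt_ofReal_iff (by linarith)).2 (by linarith)
  -- combine
  rw [hev]
  have hsplit : ∑ J : Finset (Fin n), ENNReal.ofReal (a J) * extremalCopula n J A =
      ENNReal.ofReal (a J₀) * extremalCopula n J₀ A +
        ∑ J ∈ Finset.univ.erase J₀, ENNReal.ofReal (a J) * extremalCopula n J A :=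
    (Finset.add_sum_erase _ _ (Finset.mem_univ J₀)).symm
  rw [hsplit]
  have hrest : ∑ J ∈ Finset.univ.erase J₀, ENNReal.ofReal (a J) * ENNReal.ofReal p ≤
      ∑ J ∈ Finset.univ.erase J₀, ENNReal.ofReal (a J) * extremalCopula n J A := by
    apply Finset.sum_le_sum
    intro J _
    exact mul_le_mul_right (hmge J) _
  have hconst : ∑ J ∈ Finset.univ.erase J₀, ENNReal.ofReal (a J) * ENNReal.ofReal p
      = ENNReal.ofReal (1 - a J₀) * ENNReal.ofReal p := by
    rw [← Finset.sum_mul]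
    congr 1
    rw [← ENNReal.ofReal_sum_of_nonneg (fun J _ => ha J)]
    congr 1
    have := Finset.add_sum_erase Finset.univ a (Finset.mem_univ J₀)
    rw [ha1] at this
    linarith
  have haJ₀le : a J₀ ≤ 1 := by
    rw [← ha1]
    exact Finset.single_le_sum (fun J _ => ha J) (Finset.mem_univ J₀)
  have hfinal : ENNReal.ofReal p =
      ENNReal.ofReal (a J₀) * ENNReal.ofReal p + ENNReal.ofReal (1 - a J₀) * ENNReal.ofReal p := by
    rw [← add_mul, ← ENNReal.ofReal_add (ha J₀) (by linarith)]
    norm_num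
  rw [hfinal]
  refine ENNReal.add_lt_add_of_lt_of_le ?_ ?_ (hconst ▸ hrest)
  · exact ENNReal.mul_ne_top ENNReal.ofReal_ne_top ENNReal.ofReal_ne_top
  · exact (ENNReal.mul_lt_mul_iff_right (by simp [haJ₀]) (by simp)).2 hmgt
end

section
/- Let V be a standard uniform random variable and let X = V^{-1} − 1, so X is Pareto with survival function P(X > x) = 1/(1+x) for x ≥ 0. Let Y = (1−V)^{-1} − 1. Then for any η₁, η₂ > 0 with η₁ + η₂ = 1 and any x > 0, P(η₁X + η₂Y > x) > 1/(1+x). -/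
set_option maxHeartbeats 1000000


open MeasureTheory Set

/-- Let `V` be standard uniform, `X = V⁻¹ - 1` and `Y = (1-V)⁻¹ - 1` (countermonotonic
Pareto variables with `P(X > x) = 1/(1+x)`). Then for `η₁, η₂ > 0` with `η₁ + η₂ = 1`
and any `x > 0`, `P(η₁ X + η₂ Y > x) > 1/(1+x)`. -/
theorem countermonotone_pareto_strict_tail
    {Ω : Type*} [MeasurableSpace Ω] (μ : Measure Ω) [IsProbabilityMeasure μ]
    (V : Ω → ℝ) (hMeas : Measurable V)
    (hUnif : Measure.map V μ = volume.restrict (Ioo (0:ℝ) 1))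
    (η₁ η₂ : ℝ) (hη₁ : 0 < η₁) (hη₂ : 0 < η₂) (hsum : η₁ + η₂ = 1)
    (x : ℝ) (hx : 0 < x) :
    ENNReal.ofReal (1 / (1 + x)) <
      μ {ω | x < η₁ * ((V ω)⁻¹ - 1) + η₂ * ((1 - V ω)⁻¹ - 1)} := by
  have hη₂' : η₂ = 1 - η₁ := by linarith
  subst hη₂'
  set S : Set ℝ := {v | x < η₁ * (v⁻¹ - 1) + (1 - η₁) * ((1 - v)⁻¹ - 1)} with hSdef
  have hSm : MeasurableSet S := by
    have hf : Measurable fun v : ℝ =>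
        η₁ * (v⁻¹ - 1) + (1 - η₁) * ((1 - v)⁻¹ - 1) :=
      ((measurable_id.inv.sub measurable_const).const_mul η₁).add
        (((measurable_const.sub measurable_id).inv.sub measurable_const).const_mul (1 - η₁))
    exact measurableSet_lt measurable_const hf
  set s := Real.sqrt (x ^ 2 - 4 * η₁ * (1 - η₁)) with hsdef
  have hs0 : 0 ≤ s := Real.sqrt_nonneg _
  have hsx : s < x := by
    rw [hsdef, Real.sqrt_lt' hx]; nlinarith
  have hs2 : x ^ 2 - 4 * η₁ * (1 - η₁) ≤ s ^ 2 := by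
    rcases le_or_gt 0 (x ^ 2 - 4 * η₁ * (1 - η₁)) with h | h
    · rw [hsdef, Real.sq_sqrt h]
    · nlinarith [sq_nonneg s]
  have hcpos : (0:ℝ) < 1 + x := by linarith
  set a := (x + 2 * η₁ - s) / (2 * (1 + x)) with ha
  set b := (x + 2 * η₁ + s) / (2 * (1 + x)) with hb
  have h2c : (0:ℝ) < 2 * (1 + x) := by linarith
  have hapos : 0 < a := by
    apply div_pos _ h2c; linarith
  have hab : a ≤ b := by
    rw [ha, hb, div_le_div_iff₀ h2c h2c]; nlinarith
  have hb1 : b < 1 := by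
    rw [hb, div_lt_one h2c]; nlinarith
  -- key pointwise fact
  have hkey : ∀ v : ℝ, 0 < v → v < 1 →
      0 < (1 + x) * v ^ 2 - (x + 2 * η₁) * v + η₁ → v ∈ S := by
    intro v hv0 hv1 hg
    have hvne : v ≠ 0 := ne_of_gt hv0
    have h1v : 0 < 1 - v := by linarith
    have h1vne : (1 - v) ≠ 0 := ne_of_gt h1v
    have hid : η₁ * (v⁻¹ - 1) + (1 - η₁) * ((1 - v)⁻¹ - 1)
        = x + ((1 + x) * v ^ 2 - (x + 2 * η₁) * v + η₁) / (v * (1 - v)) := by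
      field_simp
      ring
    simp only [hSdef, mem_setOf_eq, hid]
    have : 0 < ((1 + x) * v ^ 2 - (x + 2 * η₁) * v + η₁) / (v * (1 - v)) :=
      div_pos hg (mul_pos hv0 h1v)
    linarith
  have hsub : Ioo (0:ℝ) a ∪ Ioo b 1 ⊆ S ∩ Ioo 0 1 := by
    intro v hv
    rcases hv with hv | hv
    · obtain ⟨hv0, hva⟩ := hv
      have hv1 : v < 1 := lt_of_lt_of_le (lt_of_lt_of_le hva hab) (le_of_lt hb1)
      refine ⟨hkey v hv0 hv1 ?_, hv0, hv1⟩
      have ht : s < x + 2 * η₁ - 2 * (1 + x) * v := by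
        rw [ha, lt_div_iff₀ h2c] at hva; linarith
      have ht2 := mul_self_lt_mul_self hs0 ht
      nlinarith [hs2, sq_nonneg s]
    · obtain ⟨hvb, hv1⟩ := hv
      have hv0 : 0 < v := lt_of_lt_of_le hapos (le_trans hab (le_of_lt hvb))
      refine ⟨hkey v hv0 hv1 ?_, hv0, hv1⟩
      have ht : s < 2 * (1 + x) * v - (x + 2 * η₁) := by
        rw [hb, div_lt_iff₀ h2c] at hvb; linarith
      have ht2 := mul_self_lt_mul_self hs0 ht
      nlinarith [hs2, sq_nonneg s]
  have hdisj : Disjoint (Ioo (0:ℝ) a) (Ioo b 1) := by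
    apply Set.disjoint_left.mpr
    intro v hv hv'
    exact absurd (lt_of_lt_of_le hv.2 hab) (not_lt.mpr (le_of_lt hv'.1))
  have hμ : μ {ω | x < η₁ * ((V ω)⁻¹ - 1) + (1 - η₁) * ((1 - V ω)⁻¹ - 1)}
      = volume (S ∩ Ioo 0 1) := by
    have hpre : {ω | x < η₁ * ((V ω)⁻¹ - 1) + (1 - η₁) * ((1 - V ω)⁻¹ - 1)}
        = V ⁻¹' S := rfl
    rw [hpre, ← Measure.map_apply hMeas hSm, hUnif, Measure.restrict_apply hSm]
  rw [hμ]
  have hvol : ENNReal.ofReal (1 / (1 + x)) < volume (Ioo (0:ℝ) a ∪ Ioo b 1) := by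
    rw [measure_union hdisj measurableSet_Ioo, Real.volume_Ioo, Real.volume_Ioo,
      ← ENNReal.ofReal_add (by linarith) (by linarith)]
    apply (ENNReal.ofReal_lt_ofReal_iff (by linarith)).mpr
    have hab' : a - 0 + (1 - b) = (1 + x - s) / (1 + x) := by
      rw [ha, hb]; field_simp; ring
    rw [hab', div_lt_div_iff₀ hcpos hcpos]
    have h1 : (1:ℝ) < 1 + x - s := by linarith
    nlinarith
  exact lt_of_lt_of_le hvol (measure_mono hsub)
end

section
/- Let U₁,...,Uₙ be identically distributed random variables on (0,1) and suppose that for some r ≤ −1 and all w ∈ Δₙ, (∑ᵢwᵢUᵢ^r)^{1/r} ⪯_st U₁. Then setting Xᵢ = Uᵢ^r (each Pareto-distributed with infinite mean: P(Xᵢ > x) = x^{1/r} for x ≥ 1), for all w ∈ Δₙ and all x ≥ 1: P(∑ᵢ wᵢXᵢ > x) ≥ P(X₁ > x), i.e., the weighted average of the losses is riskier than a single loss (Value-at-Risk is superadditive at every level). -/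
open MeasureTheory Set Filter

section Aux

variable {Ω : Type*} [MeasurableSpace Ω] (μ : Measure Ω)

/-- If `U` is uniform on `(0,1)` then a.e. `U ω ∈ (0,1)`. -/
lemma aux_ae_mem (U : Ω → ℝ) (hU : Measurable U)
    (hUnif : Measure.map U μ = volume.restrict (Ioo (0:ℝ) 1)) :
    ∀ᵐ ω ∂μ, U ω ∈ Ioo (0:ℝ) 1 := by
  have h : μ (U ⁻¹' (Ioo (0:ℝ) 1)ᶜ) = 0 := by
    rw [← Measure.map_apply hU (measurableSet_Ioo (a := (0:ℝ)) (b := 1)).compl, hUnif,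
      Measure.restrict_apply measurableSet_Ioo.compl, compl_inter_self, measure_empty]
  rw [ae_iff]
  exact h

/-- The CDF lower bound: `μ {U ≤ y} ≥ ofReal y` for `y ≤ 1`. -/
lemma aux_cdf_ge (U : Ω → ℝ) (hU : Measurable U)
    (hUnif : Measure.map U μ = volume.restrict (Ioo (0:ℝ) 1)) {y : ℝ} (hy : y ≤ 1) :
    ENNReal.ofReal y ≤ μ {ω | U ω ≤ y} := by
  have h : μ {ω | U ω ≤ y} = volume.restrict (Ioo (0:ℝ) 1) (Iic y) := by
    rw [← hUnif, Measure.map_apply hU measurableSet_Iic]; rfl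
  rw [h, Measure.restrict_apply measurableSet_Iic]
  calc ENNReal.ofReal y = volume (Ioo (0:ℝ) y) := by
        rw [Real.volume_Ioo, sub_zero]
    _ ≤ volume (Iic y ∩ Ioo 0 1) := by
        apply measure_mono
        intro t ht
        exact ⟨le_of_lt ht.2, ht.1, lt_of_lt_of_le ht.2 hy⟩

/-- The strict CDF value: `μ {U < y} = ofReal y` for `y ≤ 1`. -/
lemma aux_cdf_lt (U : Ω → ℝ) (hU : Measurable U)
    (hUnif : Measure.map U μ = volume.restrict (Ioo (0:ℝ) 1)) {y : ℝ} (hy : y ≤ 1) :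
    μ {ω | U ω < y} = ENNReal.ofReal y := by
  have h : μ {ω | U ω < y} = volume.restrict (Ioo (0:ℝ) 1) (Iio y) := by
    rw [← hUnif, Measure.map_apply hU measurableSet_Iio]; rfl
  rw [h, Measure.restrict_apply measurableSet_Iio]
  have heq : Iio y ∩ Ioo (0:ℝ) 1 = Ioo 0 y := by
    ext t
    constructor
    · rintro ⟨ht, h0, _⟩; exact ⟨h0, ht⟩
    · rintro ⟨h0, ht⟩; exact ⟨ht, h0, lt_of_lt_of_le ht hy⟩
  rw [heq, Real.volume_Ioo, sub_zero]

end Aux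

/-- Let `U 0, ..., U (n-1)` be standard uniform on `(0,1)` and suppose that for some
`r ≤ -1` and all weights in the simplex, `(∑ i, w i * (U i)^r)^(1/r) ⪯_st U 0`. Then,
with `X i = (U i)^r` (Pareto with infinite mean), for all weights in the simplex and all
`x ≥ 1`: `P(∑ i, w i * X i > x) ≥ P(X 0 > x)`, i.e. the weighted average of the losses is
riskier than a single loss. -/
theorem subuniformity_implies_var_superadditive
    {Ω : Type*} [MeasurableSpace Ω] (μ : Measure Ω) [IsProbabilityMeasure μ]
    (n : ℕ) (hn : 2 ≤ n)
    (U : Fin n → Ω → ℝ) (hMeas : ∀ i, Measurable (U i))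
    (hUnif : ∀ i, Measure.map (U i) μ = volume.restrict (Ioo (0:ℝ) 1))
    (r : ℝ) (hr : r ≤ -1)
    (hsub : ∀ w : Fin n → ℝ, (∀ i, 0 ≤ w i) → ∑ i, w i = 1 →
      ∀ x : ℝ, μ {ω | U ⟨0, by omega⟩ ω ≤ x} ≤
        μ {ω | (∑ i, w i * U i ω ^ r) ^ r⁻¹ ≤ x}) :
    ∀ w : Fin n → ℝ, (∀ i, 0 ≤ w i) → ∑ i, w i = 1 →
      ∀ x : ℝ, 1 ≤ x →
        μ {ω | x < U ⟨0, by omega⟩ ω ^ r} ≤ μ {ω | x < ∑ i, w i * U i ω ^ r} := by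
  intro w hw hw1 x hx
  have hr0 : r < 0 := lt_of_le_of_lt hr (by norm_num)
  have hrinv : r⁻¹ < 0 := inv_neg''.mpr hr0
  have hx0 : (0:ℝ) < x := lt_of_lt_of_le one_pos hx
  set i0 : Fin n := ⟨0, by omega⟩ with hi0
  -- a.e. all U i are in (0,1)
  have hG : ∀ᵐ ω ∂μ, ∀ i, U i ω ∈ Ioo (0:ℝ) 1 :=
    ae_all_iff.mpr fun i => aux_ae_mem μ (U i) (hMeas i) (hUnif i)
  -- a.e. the weighted sum is at least 1 (hence positive)
  have hS : ∀ᵐ ω ∂μ, 1 ≤ ∑ i, w i * U i ω ^ r := by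
    filter_upwards [hG] with ω hω
    calc (1:ℝ) = ∑ i, w i := hw1.symm
      _ ≤ ∑ i, w i * U i ω ^ r := by
          apply Finset.sum_le_sum
          intro i _
          have h1 : 1 ≤ U i ω ^ r :=
            le_of_lt (((Real.one_lt_rpow_iff_of_pos (hω i).1).mpr
              (Or.inr ⟨(hω i).2, hr0⟩)))
          nlinarith [hw i]
  -- the LHS equals ofReal (x ^ r⁻¹)
  have hy1 : x ^ r⁻¹ ≤ 1 := Real.rpow_le_one_of_one_le_of_nonpos hx hrinv.le
  have hLHS : μ {ω | x < U i0 ω ^ r} = ENNReal.ofReal (x ^ r⁻¹) := by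
    have hae : {ω | x < U i0 ω ^ r} =ᵐ[μ] {ω | U i0 ω < x ^ r⁻¹} := by
      rw [Filter.eventuallyEq_set]
      filter_upwards [hG] with ω hω
      exact (Real.lt_rpow_inv_iff_of_neg (hω i0).1 hx0 hr0).symm
    rw [measure_congr hae]
    exact aux_cdf_lt μ (U i0) (hMeas i0) (hUnif i0) hy1
  rw [hLHS]
  -- lower bound μ {x < S} by ofReal (x' ^ r⁻¹) for every x' > x
  have key : ∀ x' : ℝ, x < x' →
      ENNReal.ofReal (x' ^ r⁻¹) ≤ μ {ω | x < ∑ i, w i * U i ω ^ r} := by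
    intro x' hx'
    have hx'0 : (0:ℝ) < x' := lt_trans hx0 hx'
    have hy'1 : x' ^ r⁻¹ ≤ 1 :=
      Real.rpow_le_one_of_one_le_of_nonpos (le_trans hx (le_of_lt hx')) hrinv.le
    calc ENNReal.ofReal (x' ^ r⁻¹)
        ≤ μ {ω | U i0 ω ≤ x' ^ r⁻¹} :=
          aux_cdf_ge μ (U i0) (hMeas i0) (hUnif i0) hy'1
      _ ≤ μ {ω | (∑ i, w i * U i ω ^ r) ^ r⁻¹ ≤ x' ^ r⁻¹} := hsub w hw hw1 _
      _ ≤ μ {ω | x < ∑ i, w i * U i ω ^ r} := by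
          apply measure_mono_ae
          filter_upwards [hS] with ω h1 h2
          have hSpos : (0:ℝ) < ∑ i, w i * U i ω ^ r := lt_of_lt_of_le one_pos h1
          have : x' ≤ ∑ i, w i * U i ω ^ r :=
            (Real.rpow_le_rpow_iff_of_neg hSpos hx'0 hrinv).mp h2
          show x < ∑ i, w i * U i ω ^ r
          linarith
  -- take the limit x' → x⁺
  have hcont : Tendsto (fun x' : ℝ => ENNReal.ofReal (x' ^ r⁻¹)) (nhdsWithin x (Ioi x))
      (nhds (ENNReal.ofReal (x ^ r⁻¹))) := by
    apply Tendsto.mono_left _ nhdsWithin_le_nhds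
    exact (ENNReal.continuous_ofReal.continuousAt).comp
      (Real.continuousAt_rpow_const x r⁻¹ (Or.inl (ne_of_gt hx0)))
  refine le_of_tendsto hcont ?_
  filter_upwards [self_mem_nhdsWithin] with x' hx' using key x' hx'
end
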